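/- arXiv:1709.00817 — 3 statements merged into one kernel-verified Lean document; each statement's English description precedes it below -/
import Mathlib

section
/- Let G and G' be Gauss diagrams such that G' is obtained from G by a crossing change at a chord c. Then exactly one of the following holds: (1) there exist a nonzero integer m and ε ∈ {+1,−1} such that W_G(t) − W_{G'}(t) = ε(t^m + t^{−m}) (namely m = Ind_G(c) and ε = w(c) when Ind_G(c) ≠ 0), or (2) W_G(t) = W_{G'}(t) (which occurs when Ind_G(c) = 0). -/
/-!
Reversing the chord `c` replaces its arc by the complementary arc, so every chord linked
with `c` crosses it in the opposite direction and `Ind(c)` changes sign. For any other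
chord `j`, the contribution of `c` to `Ind(j)` is `w(c)` times `±1` according to which
endpoint of `c` lies on the arc of `j`; both factors flip, so `Ind(j)` is unchanged.
Hence only the term of `c` in `W` changes, from `w(c) t^{Ind(c)}` to `-w(c) t^{-Ind(c)}`.
-/
open scoped Classical

/-- A Gauss diagram with `n` chords: the `2n` marked points live on the cyclic group
`ZMod (2*n)` (the oriented circle); each chord `i` is the ordered pair
`(tail i, head i)` of marked points and carries a sign (writhe) `sign i ∈ {+1, -1}`;
all `2n` endpoints are distinct. -/
structure GaussDiagram (n : ℕ) where
  tail : Fin n → ZMod (2 * n)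
  head : Fin n → ZMod (2 * n)
  sign : Fin n → ℤ
  sign_mem : ∀ i, sign i = 1 ∨ sign i = -1
  endpoints_inj : Function.Injective
    (fun p : Fin n × Bool => if p.2 then head p.1 else tail p.1)

namespace GaussDiagram

variable {n : ℕ}

/-- `x` lies on the open arc running in the circle's orientation from `a` to `b`. -/
def arcMem (a b x : ZMod (2 * n)) : Prop :=
  0 < (x - a).val ∧ (x - a).val < (b - a).val

/-- `x` lies on the open oriented arc from the tail to the head of chord `i`. -/
def inArc (G : GaussDiagram n) (i : Fin n) (x : ZMod (2 * n)) : Prop :=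
  arcMem (G.tail i) (G.head i) x

/-- Chords `i` and `j` are linked: exactly one endpoint of `j` lies on the open
oriented arc from the tail to the head of `i`. -/
def linked (G : GaussDiagram n) (i j : Fin n) : Prop :=
  Xor' (G.inArc i (G.tail j)) (G.inArc i (G.head j))

/-- Chord `j` crosses chord `i` from right to left. -/
def crossesRL (G : GaussDiagram n) (i j : Fin n) : Prop :=
  G.linked i j ∧ G.inArc i (G.head j)

/-- Chord `j` crosses chord `i` from left to right. -/
def crossesLR (G : GaussDiagram n) (i j : Fin n) : Prop :=
  G.linked i j ∧ G.inArc i (G.tail j)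

/-- The index of the chord `i`: `Ind(i) = r₊ − r₋ − l₊ + l₋`. -/
noncomputable def ind (G : GaussDiagram n) (i : Fin n) : ℤ :=
  ((Finset.univ.filter fun j => G.crossesRL i j ∧ G.sign j = 1).card : ℤ)
    - ((Finset.univ.filter fun j => G.crossesRL i j ∧ G.sign j = -1).card : ℤ)
    - ((Finset.univ.filter fun j => G.crossesLR i j ∧ G.sign j = 1).card : ℤ)
    + ((Finset.univ.filter fun j => G.crossesLR i j ∧ G.sign j = -1).card : ℤ)

/-- The `k`-th writhe `J_k(G)`: the number of positive chords of index `k` minus the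
number of negative chords of index `k`. -/
noncomputable def J (G : GaussDiagram n) (k : ℤ) : ℤ :=
  ((Finset.univ.filter fun i => G.ind i = k ∧ G.sign i = 1).card : ℤ)
    - ((Finset.univ.filter fun i => G.ind i = k ∧ G.sign i = -1).card : ℤ)

/-- The writhe polynomial `W_G(t) = ∑_{Ind(c) ≠ 0} w(c) t^{Ind(c)} = ∑_{k ≠ 0} J_k(G) t^k`. -/
noncomputable def writhePoly (G : GaussDiagram n) : LaurentPolynomial ℤ :=
  ∑ i ∈ Finset.univ.filter (fun i => G.ind i ≠ 0),
    LaurentPolynomial.C (G.sign i) * LaurentPolynomial.T (G.ind i)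

/-- The odd writhe `J(G) = ∑_{c ∈ Odd(G)} w(c)`. -/
noncomputable def oddWrithe (G : GaussDiagram n) : ℤ :=
  ∑ i ∈ Finset.univ.filter (fun i => Odd (G.ind i)), G.sign i

/-- `G'` is obtained from `G` by a crossing change at the chord `c`: the tail and head
of `c` are interchanged and its sign is negated, all other chords being unchanged. -/
def IsCrossingChangeAt (G G' : GaussDiagram n) (c : Fin n) : Prop :=
  G'.tail c = G.head c ∧ G'.head c = G.tail c ∧ G'.sign c = -G.sign c ∧
    ∀ j : Fin n, j ≠ c →
      G'.tail j = G.tail j ∧ G'.head j = G.head j ∧ G'.sign j = G.sign j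

/-- `G'` is obtained from `G` by a crossing change (at some chord). -/
def IsCrossingChange (G G' : GaussDiagram n) : Prop :=
  ∃ c, IsCrossingChangeAt G G' c

/-- `G'` is obtained from `G` by a sequence of `m` crossing changes. -/
def ChangedBy (m : ℕ) (G G' : GaussDiagram n) : Prop :=
  ∃ f : ℕ → GaussDiagram n, f 0 = G ∧ f m = G' ∧
    ∀ i < m, IsCrossingChange (f i) (f (i + 1))

end GaussDiagram

theorem ZMod.val_sub_lt_val_neg_iff {N : ℕ} [NeZero N] {y d : ZMod N} (hd : d ≠ 0) :
    (y - d).val < (-d).val ↔ d.val ≤ y.val := by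
  have hneg : (-d).val = N - d.val := by rw [ZMod.neg_val, if_neg hd]
  have hdN := d.val_lt
  have hyN := y.val_lt
  rcases le_or_gt d.val y.val with hle | hlt
  · rw [hneg, ZMod.val_sub hle]; omega
  · rw [sub_eq_add_neg, ZMod.val_add_of_lt (by omega), hneg]; omega

theorem LaurentPolynomial.C_mul_T_add_T_neg_ne_zero {R : Type*} [Semiring R] {ε : R}
    (hε : ε ≠ 0) {m : ℤ} (hm : m ≠ 0) :
    C ε * (T m + T (-m)) ≠ 0 := by
  intro h
  have hm' : -m ≠ m := by omega
  have hcoeff := congrArg (fun p : LaurentPolynomial R => p.coeff m) h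
  simp [mul_add, ← single_eq_C_mul_T, hm'] at hcoeff
  exact hε hcoeff

namespace GaussDiagram

open LaurentPolynomial

variable {n : ℕ}

theorem arcMem_swap_iff [NeZero n] {a b x : ZMod (2 * n)} (hab : a ≠ b) (hxa : x ≠ a)
    (hxb : x ≠ b) : arcMem b a x ↔ ¬ arcMem a b x := by
  have hpos_a : 0 < (x - a).val := ZMod.val_pos.mpr (sub_ne_zero.mpr hxa)
  have hpos_b : 0 < (x - b).val := ZMod.val_pos.mpr (sub_ne_zero.mpr hxb)
  have key := ZMod.val_sub_lt_val_neg_iff (y := x - a) (sub_ne_zero.mpr hab.symm)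
  rw [sub_sub_sub_cancel_right, neg_sub] at key
  simp only [arcMem, hpos_a, hpos_b, true_and, key, not_lt]

theorem endpoint_ne (G : GaussDiagram n) {i j : Fin n} {p q : Bool} (h : (i, p) ≠ (j, q)) :
    (if p then G.head i else G.tail i) ≠ (if q then G.head j else G.tail j) :=
  fun heq => h (G.endpoints_inj heq)

theorem tail_ne_head (G : GaussDiagram n) (i j : Fin n) : G.tail i ≠ G.head j :=
  G.endpoint_ne (p := false) (q := true) (by simp)

theorem tail_ne_tail (G : GaussDiagram n) {i j : Fin n} (hij : i ≠ j) : G.tail i ≠ G.tail j :=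
  G.endpoint_ne (p := false) (q := false) (by simp [hij])

theorem head_ne_head (G : GaussDiagram n) {i j : Fin n} (hij : i ≠ j) : G.head i ≠ G.head j :=
  G.endpoint_ne (p := true) (q := true) (by simp [hij])

theorem not_inArc_tail (G : GaussDiagram n) (i : Fin n) : ¬ G.inArc i (G.tail i) := by
  simp [inArc, arcMem]

theorem not_inArc_head (G : GaussDiagram n) (i : Fin n) : ¬ G.inArc i (G.head i) := by
  simp [inArc, arcMem]

theorem linked_iff (G : GaussDiagram n) (i j : Fin n) :
    G.linked i j ↔ G.inArc i (G.tail j) ∧ ¬ G.inArc i (G.head j) ∨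
      G.inArc i (G.head j) ∧ ¬ G.inArc i (G.tail j) :=
  xor_def

theorem ind_eq_sum (G : GaussDiagram n) (i : Fin n) :
    G.ind i = ∑ j, G.sign j *
      ((if G.inArc i (G.head j) then 1 else 0) - (if G.inArc i (G.tail j) then 1 else 0)) := by
  simp only [ind, Finset.card_filter, Nat.cast_sum, Nat.cast_ite, Nat.cast_one, Nat.cast_zero,
    ← Finset.sum_sub_distrib, ← Finset.sum_add_distrib]
  refine Finset.sum_congr rfl fun j _ => ?_
  rcases G.sign_mem j with hs | hs <;> by_cases hh : G.inArc i (G.head j) <;>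
    by_cases ht : G.inArc i (G.tail j) <;> simp [crossesRL, crossesLR, linked_iff, hs, hh, ht]

theorem writhePoly_sub_eq_of_forall_ne {G G' : GaussDiagram n} {c : Fin n}
    (hsign : ∀ j ≠ c, G'.sign j = G.sign j) (hind : ∀ j ≠ c, G'.ind j = G.ind j) :
    G.writhePoly - G'.writhePoly =
      (if G.ind c ≠ 0 then C (G.sign c) * T (G.ind c) else 0)
        - (if G'.ind c ≠ 0 then C (G'.sign c) * T (G'.ind c) else 0) := by
  rw [writhePoly, writhePoly, Finset.sum_filter, Finset.sum_filter, ← Finset.sum_sub_distrib,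
    Finset.sum_eq_single c (fun j _ hj => by rw [hsign j hj, hind j hj, sub_self])
      (fun hc => absurd (Finset.mem_univ c) hc)]

namespace IsCrossingChangeAt

variable {G G' : GaussDiagram n} {c : Fin n}

theorem inArc_self_iff (h : G.IsCrossingChangeAt G' c) {x : ZMod (2 * n)}
    (hxt : x ≠ G.tail c) (hxh : x ≠ G.head c) : G'.inArc c x ↔ ¬ G.inArc c x := by
  have : NeZero n := NeZero.of_pos c.pos
  rw [inArc, inArc, h.1, h.2.1]
  exact arcMem_swap_iff (G.tail_ne_head c c) hxt hxh

theorem inArc_of_ne (h : G.IsCrossingChangeAt G' c) {j : Fin n} (hj : j ≠ c)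
    (x : ZMod (2 * n)) : G'.inArc j x ↔ G.inArc j x := by
  rw [inArc, inArc, (h.2.2.2 j hj).1, (h.2.2.2 j hj).2.1]

theorem ind_self (h : G.IsCrossingChangeAt G' c) : G'.ind c = -G.ind c := by
  rw [ind_eq_sum, ind_eq_sum, ← Finset.sum_neg_distrib]
  refine Finset.sum_congr rfl fun d _ => ?_
  by_cases hd : d = c
  · subst hd
    have h_tail : ¬ G'.inArc d (G'.tail d) := G'.not_inArc_tail d
    have h_head : ¬ G'.inArc d (G'.head d) := G'.not_inArc_head d
    simp [not_inArc_tail, not_inArc_head, h_tail, h_head]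
  · obtain ⟨htail, hhead, hsign⟩ := h.2.2.2 d hd
    rw [htail, hhead, hsign,
      h.inArc_self_iff (G.tail_ne_head c d).symm (G.head_ne_head hd),
      h.inArc_self_iff (G.tail_ne_tail hd) (G.tail_ne_head d c)]
    split_ifs <;> ring

theorem ind_of_ne (h : G.IsCrossingChangeAt G' c) {j : Fin n} (hj : j ≠ c) :
    G'.ind j = G.ind j := by
  rw [ind_eq_sum, ind_eq_sum]
  refine Finset.sum_congr rfl fun d _ => ?_
  by_cases hd : d = c
  · subst hd
    simp only [h.inArc_of_ne hj, h.1, h.2.1, h.2.2.1]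
    ring
  · obtain ⟨htail, hhead, hsign⟩ := h.2.2.2 d hd
    simp only [h.inArc_of_ne hj, htail, hhead, hsign]

theorem writhePoly_sub (h : G.IsCrossingChangeAt G' c) :
    G.writhePoly - G'.writhePoly =
      if G.ind c = 0 then 0 else C (G.sign c) * (T (G.ind c) + T (-G.ind c)) := by
  rw [writhePoly_sub_eq_of_forall_ne (fun j hj => (h.2.2.2 j hj).2.2) (fun j => h.ind_of_ne)]
  simp only [h.ind_self, h.2.2.1, neg_ne_zero]
  by_cases h0 : G.ind c = 0 <;> simp [h0, mul_add]

end IsCrossingChangeAt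

end GaussDiagram

/-- if `G'` is obtained from `G` by a crossing change at a chord `c`, then
exactly one of the following holds: (1) `W_G(t) − W_{G'}(t) = ε (t^m + t^{−m})` for some
nonzero integer `m` and `ε ∈ {±1}` (namely `m = Ind(c)`, `ε = w(c)` when `Ind(c) ≠ 0`),
or (2) `W_G(t) = W_{G'}(t)` (which occurs when `Ind(c) = 0`). -/
theorem writhePoly_crossingChange {n : ℕ} (G G' : GaussDiagram n) (c : Fin n)
    (h : G.IsCrossingChangeAt G' c) :
    Xor'
      (∃ m : ℤ, m ≠ 0 ∧ ∃ ε : ℤ, (ε = 1 ∨ ε = -1) ∧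
        G.writhePoly - G'.writhePoly =
          LaurentPolynomial.C ε * (LaurentPolynomial.T m + LaurentPolynomial.T (-m)))
      (G.writhePoly = G'.writhePoly)
    ∧ (G.ind c ≠ 0 →
        G.writhePoly - G'.writhePoly =
          LaurentPolynomial.C (G.sign c) *
            (LaurentPolynomial.T (G.ind c) + LaurentPolynomial.T (-G.ind c)))
    ∧ (G.ind c = 0 → G.writhePoly = G'.writhePoly) := by
  have hdiff := h.writhePoly_sub
  by_cases h0 : G.ind c = 0
  · rw [if_pos h0] at hdiff
    have hW : G.writhePoly = G'.writhePoly := sub_eq_zero.mp hdiff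
    refine ⟨Or.inr ⟨hW, ?_⟩, fun hc => absurd h0 hc, fun _ => hW⟩
    rintro ⟨m, hm, ε, hε, heq⟩
    exact LaurentPolynomial.C_mul_T_add_T_neg_ne_zero (by omega) hm (heq ▸ hdiff)
  · rw [if_neg h0] at hdiff
    have hsign : G.sign c ≠ 0 := by rcases G.sign_mem c with hs | hs <;> omega
    have hW : G.writhePoly ≠ G'.writhePoly := fun hW =>
      LaurentPolynomial.C_mul_T_add_T_neg_ne_zero hsign h0 (hdiff ▸ sub_eq_zero.mpr hW)
    exact ⟨Or.inl ⟨⟨_, h0, _, G.sign_mem c, hdiff⟩, hW⟩, fun _ => hdiff, fun hc => absurd hc h0⟩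
end

section
/- Let G be a Gauss diagram with c chords in which every two distinct chords are linked. Then every chord of G has index congruent to c − 1 modulo 2; in particular, if c is even then every chord of G has odd index, and if moreover every chord of G has writhe +1, then the odd writhe satisfies J(G) = c. -/
open scoped Classical

/-
Mod 2 the signs in `Ind(c) = r₊ − r₋ − l₊ + l₋` do not matter, so `Ind(c)` has the parity of
the number of chords crossing `c`. A chord linked with `c` crosses it either from right to left
or from left to right, never both, so that number is the number of chords linked with `c`; when
all chords are pairwise linked it is `n − 1`, as no chord is linked with itself.
-/

open Finset

namespace GaussDiagram

variable {n : ℕ} (G : GaussDiagram n)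

theorem not_linked_self (i : Fin n) : ¬ G.linked i i := by
  rintro (⟨⟨htail, -⟩, -⟩ | ⟨⟨-, hhead⟩, -⟩)
  · simp at htail
  · exact hhead.false

theorem card_filter_sign_one_add_card_filter_sign_neg_one (p : Fin n → Prop) :
    #{j | p j ∧ G.sign j = 1} + #{j | p j ∧ G.sign j = -1} = #{j | p j} := by
  have hneg :
      univ.filter (fun j => p j ∧ G.sign j = -1) = univ.filter fun j => p j ∧ ¬ G.sign j = 1 :=
    filter_congr fun j _ => by rcases G.sign_mem j with h | h <;> simp [h]
  rw [hneg, ← filter_filter, ← filter_filter]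
  exact card_filter_add_card_filter_not _

theorem ind_modEq_card_crossesRL_add_card_crossesLR (i : Fin n) :
    G.ind i ≡ (#{j | G.crossesRL i j} + #{j | G.crossesLR i j} : ℕ) [ZMOD 2] := by
  have hRL := G.card_filter_sign_one_add_card_filter_sign_neg_one (G.crossesRL i)
  have hLR := G.card_filter_sign_one_add_card_filter_sign_neg_one (G.crossesLR i)
  rw [Int.ModEq, ind, ← hRL, ← hLR]
  push_cast
  omega

theorem card_crossesRL_add_card_crossesLR (i : Fin n) :
    #{j | G.crossesRL i j} + #{j | G.crossesLR i j} = #{j | G.linked i j} := by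
  have hdisj : Disjoint (univ.filter (G.crossesRL i)) (univ.filter (G.crossesLR i)) :=
    disjoint_filter.mpr fun j _ hRL hLR =>
      ((xor_iff_or_and_not_and _ _).mp hRL.1).2 ⟨hLR.2, hRL.2⟩
  have hunion : univ.filter (G.linked i) =
      univ.filter (G.crossesRL i) ∪ univ.filter (G.crossesLR i) := by
    rw [← filter_or]
    exact filter_congr fun j _ =>
      ⟨fun h => (Xor.or h).symm.imp (⟨h, ·⟩) (⟨h, ·⟩), fun h => h.elim And.left And.left⟩
  rw [hunion, card_union_of_disjoint hdisj]

theorem ind_modEq_card_linked (i : Fin n) : G.ind i ≡ #{j | G.linked i j} [ZMOD 2] := by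
  simpa only [card_crossesRL_add_card_crossesLR] using
    G.ind_modEq_card_crossesRL_add_card_crossesLR i

theorem card_linked_add_one {i : Fin n} (hlinked : ∀ j, j ≠ i → G.linked i j) :
    #{j | G.linked i j} + 1 = n := by
  have hfilter_linked : univ.filter (G.linked i) = univ.erase i :=
    ext fun j => by
      simpa using ⟨fun h hji => G.not_linked_self i (hji ▸ h), hlinked j⟩
  rw [hfilter_linked, card_erase_add_one (mem_univ i), card_univ, Fintype.card_fin]

theorem oddWrithe_eq_of_forall_odd_ind (hodd : ∀ i, Odd (G.ind i))
    (hsign : ∀ i, G.sign i = 1) : G.oddWrithe = n := by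
  simp [oddWrithe, hodd, hsign]

end GaussDiagram

/-- in a Gauss diagram with `c` chords in which every two distinct chords are
linked, every chord has index congruent to `c − 1` modulo `2`; in particular if `c` is even
every chord has odd index, and if moreover all writhes are `+1` then `J(G) = c`. -/
theorem ind_parity_of_pairwise_linked {c : ℕ} (G : GaussDiagram c)
    (hlinked : ∀ i j : Fin c, i ≠ j → G.linked i j) :
    (∀ i : Fin c, G.ind i ≡ (c : ℤ) - 1 [ZMOD 2]) ∧
      (Even c → (∀ i : Fin c, Odd (G.ind i)) ∧
        ((∀ i : Fin c, G.sign i = 1) → G.oddWrithe = (c : ℤ))) := by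
  have hind (i : Fin c) : G.ind i ≡ (c : ℤ) - 1 [ZMOD 2] := by
    have hcard := G.card_linked_add_one fun j hji => hlinked i j hji.symm
    refine (G.ind_modEq_card_linked i).trans ?_
    rw [Int.ModEq]
    omega
  have hodd (hc : Even c) (i : Fin c) : Odd (G.ind i) := by
    have hparity := hind i
    rw [Int.ModEq] at hparity
    rw [Int.odd_iff]
    obtain ⟨k, rfl⟩ := hc
    omega
  exact ⟨hind, fun hc => ⟨hodd hc, G.oddWrithe_eq_of_forall_odd_ind (hodd hc)⟩⟩
end

section
/- Let Λ = ℤ[t,t⁻¹] be the ring of Laurent polynomials over ℤ, and let n be a positive integer. The minimal number of generators of the Λ-module M = (Λ/(t² − t + 1))ⁿ, the direct sum of n copies of the quotient of Λ by the ideal generated by t² − t + 1, is exactly n: M is generated by n elements, and no set of fewer than n elements generates M. -/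
/-!
Over a nontrivial commutative ring `A`, the free module `Aⁿ` needs `n` generators (strong rank
condition), and generators over any ring `R` mapping to `A` are in particular generators over
`A`. For `A = Λ/(t² − t + 1)`, which is nontrivial and a quotient of `Λ`, the standard basis
gives `n` generators over `Λ`.
-/

open LaurentPolynomial

/-- The virtual knot module of the trefoil: `Λ/(t² − t + 1)` where `Λ = ℤ[t,t⁻¹]`. -/
abbrev TrefoilModule : Type :=
  LaurentPolynomial ℤ ⧸ Ideal.span {(T 2 - T 1 + 1 : LaurentPolynomial ℤ)}

section PiGenerators

variable {R A : Type*} [CommRing R] [CommRing A] [Algebra R A] {n : ℕ}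

theorem le_card_of_span_eq_top_pi [Nontrivial A] {s : Finset (Fin n → A)}
    (hs : Submodule.span R (s : Set (Fin n → A)) = ⊤) : n ≤ s.card := by
  have hsA : Submodule.span A (s : Set (Fin n → A)) = ⊤ :=
    eq_top_iff.mpr fun x _ ↦ Submodule.span_le_restrictScalars R A _ (hs ▸ trivial)
  calc n = Module.finrank A (Fin n → A) := (Module.finrank_fin_fun A).symm
    _ = (s : Set (Fin n → A)).finrank A := by rw [Set.finrank, hsA, finrank_top]
    _ ≤ s.card := finrank_span_finset_le_card s

theorem span_range_basisFun_eq_top (h : Function.Surjective (algebraMap R A)) :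
    Submodule.span R (Set.range (Pi.basisFun A (Fin n))) = ⊤ := by
  rw [← Submodule.restrictScalars_span R A h, (Pi.basisFun A (Fin n)).span_eq,
    Submodule.restrictScalars_top]

end PiGenerators

instance : Nontrivial TrefoilModule := by
  -- `t ↦ -1` sends `t² - t + 1` to `3 = 0` in `ZMod 3`, so it is not a unit.
  let ev := eval₂ (Int.castRingHom (ZMod 3)) (-1)
  have hev : ev (T 2 - T 1 + 1) = 0 := by
    simp only [ev, map_add, map_sub, map_one, eval₂_T]
    decide
  refine Ideal.Quotient.nontrivial_iff.mpr fun h ↦ ?_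
  simpa [hev] using (Ideal.span_singleton_eq_top.mp h).map ev

theorem minGenerators_trefoil_module_general (n : ℕ) :
    (∃ s : Finset (Fin n → TrefoilModule), s.card = n ∧
      Submodule.span (LaurentPolynomial ℤ) (s : Set (Fin n → TrefoilModule)) = ⊤) ∧
    ∀ s : Finset (Fin n → TrefoilModule),
      Submodule.span (LaurentPolynomial ℤ) (s : Set (Fin n → TrefoilModule)) = ⊤ →
        n ≤ s.card := by
  classical
  refine ⟨⟨Finset.univ.image (Pi.basisFun TrefoilModule (Fin n)), ?_, ?_⟩,
    fun s hs ↦ le_card_of_span_eq_top_pi hs⟩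
  · rw [Finset.card_image_of_injective _ (Pi.basisFun _ _).injective, Finset.card_fin]
  · rw [Finset.coe_image, Finset.coe_univ, Set.image_univ]
    exact span_range_basisFun_eq_top Ideal.Quotient.mk_surjective

/-- over the Laurent polynomial ring `Λ = ℤ[t,t⁻¹]`, the module
`M = (Λ/(t² − t + 1))ⁿ` (the virtual knot module of the `n`-fold connected sum of
trefoils, `n > 0`) has minimal number of generators exactly `n`: it is generated by `n`
elements, and no set of fewer than `n` elements generates it. -/
theorem minGenerators_trefoil_module (n : ℕ) (hn : 0 < n) :
    (∃ s : Finset (Fin n → TrefoilModule), s.card = n ∧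
      Submodule.span (LaurentPolynomial ℤ) (s : Set (Fin n → TrefoilModule)) = ⊤) ∧
    ∀ s : Finset (Fin n → TrefoilModule),
      Submodule.span (LaurentPolynomial ℤ) (s : Set (Fin n → TrefoilModule)) = ⊤ →
        n ≤ s.card :=
  minGenerators_trefoil_module_general n
end
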